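/- arXiv:1508.00687 — 2 statements merged into one kernel-verified Lean document; each statement's English description precedes it below -/
import Mathlib

section
/- There exists a constant C > 0 such that for every T ∈ (0,1], (1/T) · ∫_{T^{1/4}}^∞ ∫_{-∞}^{T^{1/4}} exp( -(R/2 - x + T^{1/4})²/(2T) ) dx dR ≤ C · exp( -1/(32·√T) ). -/
/-!
For `R ≥ t` and `x ≤ t` the Gaussian exponent dominates a function linear in `R` and in `x`
separately, so the double integral is at most a product of two exponential integrals,
`16 T² / t² · exp (-t² / (8 T))`. At `t = T^{1/4}` this is `16 √T · exp (-1 / (8 √T))`.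
-/

open MeasureTheory Real Set

theorem setIntegral_setIntegral_le_mul {α β : Type*} [MeasurableSpace α] [MeasurableSpace β]
    {μ : Measure α} {ν : Measure β} {s : Set α} {u : Set β} (hu : MeasurableSet u)
    {f : α → β → ℝ} {g : α → ℝ} {h : β → ℝ}
    (hf : ∀ a ∈ s, ∀ b ∈ u, 0 ≤ f a b) (hfgh : ∀ a ∈ s, ∀ b ∈ u, f a b ≤ g a * h b)
    (hg : IntegrableOn g s μ) (hh : IntegrableOn h u ν) :
    ∫ a in s, ∫ b in u, f a b ∂ν ∂μ ≤ (∫ a in s, g a ∂μ) * ∫ b in u, h b ∂ν := by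
  rw [← integral_mul_const]
  refine setIntegral_mono_of_nonneg (fun a ha => setIntegral_nonneg hu (hf a ha))
    (fun a ha => ?_) (hg.mul_const _)
  rw [← integral_const_mul]
  exact setIntegral_mono_of_nonneg (hf a ha) (hfgh a ha) (hh.const_mul _)

theorem integral_exp_mul_sub_Iio {d : ℝ} (hd : 0 < d) (t : ℝ) :
    ∫ x in Iio t, exp (d * (x - t)) = 1 / d := by
  simp_rw [mul_sub, exp_sub]
  rw [integral_div, setIntegral_congr_set Iio_ae_eq_Iic, integral_exp_mul_Iic hd]
  field_simp

theorem integrableOn_exp_mul_sub_Iio {d : ℝ} (hd : 0 < d) (t : ℝ) :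
    IntegrableOn (fun x => exp (d * (x - t))) (Iio t) := by
  simp_rw [mul_sub, exp_sub]
  exact ((integrableOn_exp_mul_Iic hd t).mono_set Iio_subset_Iic_self).div_const _

/-- With `u = t - x ≥ 0`: `(R/2 + u)² ≥ R²/4 + R u ≥ t R / 4 + t u`. -/
theorem exp_neg_sq_le_exp_mul_exp {T t R x : ℝ} (hT : 0 < T) (ht : 0 ≤ t) (htR : t ≤ R)
    (hx : x ≤ t) :
    exp (-(R / 2 - x + t) ^ 2 / (2 * T)) ≤
      exp (-(t / (8 * T)) * R) * exp (t / (2 * T) * (x - t)) := by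
  rw [← exp_add, exp_le_exp]
  have key : t * R / 4 + t * (t - x) ≤ (R / 2 - x + t) ^ 2 := by
    nlinarith [mul_le_mul_of_nonneg_right htR (ht.trans htR),
      mul_le_mul_of_nonneg_right htR (sub_nonneg.2 hx), sq_nonneg (t - x)]
  have h : -(t / (8 * T)) * R + t / (2 * T) * (x - t) = -(t * R / 4 + t * (t - x)) / (2 * T) := by
    field_simp
    ring
  rw [h]
  gcongr

theorem integral_Ioi_integral_Iio_exp_neg_sq_le {T t : ℝ} (hT : 0 < T) (ht : 0 < t) :
    ∫ R in Ioi t, ∫ x in Iio t, exp (-(R / 2 - x + t) ^ 2 / (2 * T)) ≤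
      16 * T ^ 2 / t ^ 2 * exp (-t ^ 2 / (8 * T)) := by
  have hc : 0 < t / (8 * T) := by positivity
  have hd : 0 < t / (2 * T) := by positivity
  calc _ ≤ (∫ R in Ioi t, exp (-(t / (8 * T)) * R)) *
        ∫ x in Iio t, exp (t / (2 * T) * (x - t)) :=
        setIntegral_setIntegral_le_mul measurableSet_Iio (fun _ _ _ _ => (exp_pos _).le)
          (fun R hR x hx => exp_neg_sq_le_exp_mul_exp hT ht.le (le_of_lt hR) (le_of_lt hx))
          (integrableOn_exp_mul_Ioi (neg_lt_zero.2 hc) t) (integrableOn_exp_mul_sub_Iio hd t)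
    _ = 16 * T ^ 2 / t ^ 2 * exp (-t ^ 2 / (8 * T)) := by
        rw [integral_exp_mul_Ioi (neg_lt_zero.2 hc), integral_exp_mul_sub_Iio hd]
        field_simp
        ring_nf

/-- There exists a constant `C > 0` such that for every `T ∈ (0,1]`,
`(1/T) · ∫_{T^{1/4}}^∞ ∫_{-∞}^{T^{1/4}} exp( -(R/2 - x + T^{1/4})²/(2T) ) dx dR
  ≤ C · exp( -1/(32·√T) )`. -/
theorem stmt_5 :
    ∃ C : ℝ, 0 < C ∧ ∀ T : ℝ, 0 < T → T ≤ 1 →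
      (1 / T) *
        ∫ R in Set.Ioi (T ^ ((1:ℝ)/4)),
          ∫ x in Set.Iio (T ^ ((1:ℝ)/4)),
            Real.exp (-(R / 2 - x + T ^ ((1:ℝ)/4))^2 / (2 * T)) ≤
      C * Real.exp (-1 / (32 * Real.sqrt T)) := by
  refine ⟨16, by norm_num, fun T hT hT1 => ?_⟩
  have hsq : (T ^ ((1:ℝ)/4)) ^ 2 = √T := by
    rw [← rpow_mul_natCast hT.le, sqrt_eq_rpow]
    norm_num
  set s := √T
  have hT_eq : T = s ^ 2 := (sq_sqrt hT.le).symm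
  calc _ ≤ 1 / T * (16 * T ^ 2 / (T ^ ((1:ℝ)/4)) ^ 2 * exp (-(T ^ ((1:ℝ)/4)) ^ 2 / (8 * T))) :=
        mul_le_mul_of_nonneg_left
          (integral_Ioi_integral_Iio_exp_neg_sq_le hT (rpow_pos_of_pos hT _)) (by positivity)
    _ = 16 * s * exp (-1 / (8 * s)) := by
        rw [hsq, hT_eq]
        field_simp
    _ ≤ 16 * 1 * exp (-1 / (32 * s)) := by
        gcongr 16 * ?_ * exp ?_
        · exact sqrt_le_one.2 hT1
        · rw [neg_div, neg_div, neg_le_neg_iff]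
          gcongr
          norm_num
    _ = 16 * exp (-1 / (32 * s)) := by ring
end

section
/- Let f : ℝ → [0,∞) be continuous, N ∈ ℕ, and let Φ : ℝ → [0,∞) be continuous with support contained in (-1,0) and ∫_ℝ Φ = 1. For m₀ > 0 set Φ_{m₀}(x) = (1/m₀)·Φ(x/m₀) and R^N_{m₀}(f) := ∫_0^{m₀} Φ_{m₀}(-m) · R^{m,N}(f) dm. Then for all 0 < m₀ ≤ m one has R^{m,N}(f) ≤ R^N_{m₀}(f) ≤ R^{0,N}(f), and R^N_{m₀}(f) → R^{0,N}(f) as m₀ ↓ 0⁺. -/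
/-!
Since `m ↦ R^{m,N}(f)` is antitone and bounded by `R^{0,N}(f)`, while the rescaled mollifier
`m ↦ Φ_{m₀}(-m)` is a probability density on `[0, m₀]`, the average `R^N_{m₀}(f)` lies between
`R^{m₀,N}(f)` and `R^{0,N}(f)`. For the limit it then suffices that `R^{m,N}(f) → R^{0,N}(f)`
as `m ↓ 0`: any point `y` with `f y > 0` can be pushed slightly to the left to a point `z`
with `∫_z^N f > 0`, by continuity and nonnegativity of `f`, and `z` then belongs to the set
defining `R^{m,N}(f)` for every `m ≤ ∫_z^N f`.
-/

open MeasureTheory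

/-- The approximating right wavefront marker
`R^{m,N}(f) = sup{ x ∈ [-N,N] : f(x) > 0 and ∫_x^N f ≥ m }`, with the convention
`sup ∅ = -N` (realized by inserting `-N` into the set). -/
noncomputable def RmN (N : ℕ) (f : ℝ → ℝ) (m : ℝ) : ℝ :=
  sSup (insert (-(N : ℝ))
    {x : ℝ | x ∈ Set.Icc (-(N : ℝ)) (N : ℝ) ∧ 0 < f x ∧ m ≤ ∫ y in x..(N : ℝ), f y})

/-- `R^{0,N}(f) = sup{ x ∈ [-N,N] : f(x) > 0 }` if this set is nonempty, and `-N`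
otherwise (realized by inserting `-N` into the set). -/
noncomputable def R0N (N : ℕ) (f : ℝ → ℝ) : ℝ :=
  sSup (insert (-(N : ℝ)) {x : ℝ | x ∈ Set.Icc (-(N : ℝ)) (N : ℝ) ∧ 0 < f x})

/-- The mollified wavefront marker
`R^N_{m₀}(f) = ∫_0^{m₀} Φ_{m₀}(-m) · R^{m,N}(f) dm`, where `Φ_{m₀}(x) = (1/m₀)Φ(x/m₀)`. -/
noncomputable def RNmoll (N : ℕ) (Φ : ℝ → ℝ) (m₀ : ℝ) (f : ℝ → ℝ) : ℝ :=
  ∫ m in (0:ℝ)..m₀, (1 / m₀) * Φ (-m / m₀) * RmN N f m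

open Set Filter Topology

lemma bddAbove_insert_setOf_mem_Icc (c a b : ℝ) (P : ℝ → Prop) :
    BddAbove (insert c {x | x ∈ Icc a b ∧ P x}) :=
  (bddAbove_Icc.mono fun _ hx => hx.1).insert c

section WeightedAverage

variable {w g : ℝ → ℝ} {a b c : ℝ}

lemma le_integral_mul_of_le (hab : a ≤ b) (hw : ContinuousOn w (uIcc a b))
    (hg : IntervalIntegrable g volume a b) (hw0 : ∀ x ∈ Icc a b, 0 ≤ w x)
    (hw1 : ∫ x in a..b, w x = 1) (hc : ∀ x ∈ Icc a b, c ≤ g x) :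
    c ≤ ∫ x in a..b, w x * g x :=
  calc c = ∫ x in a..b, w x * c := by rw [intervalIntegral.integral_mul_const, hw1, one_mul]
    _ ≤ ∫ x in a..b, w x * g x :=
      intervalIntegral.integral_mono_on hab (hw.intervalIntegrable.mul_const c)
        (hg.continuousOn_mul hw) fun x hx => mul_le_mul_of_nonneg_left (hc x hx) (hw0 x hx)

lemma integral_mul_le_of_le (hab : a ≤ b) (hw : ContinuousOn w (uIcc a b))
    (hg : IntervalIntegrable g volume a b) (hw0 : ∀ x ∈ Icc a b, 0 ≤ w x)
    (hw1 : ∫ x in a..b, w x = 1) (hc : ∀ x ∈ Icc a b, g x ≤ c) :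
    ∫ x in a..b, w x * g x ≤ c :=
  calc ∫ x in a..b, w x * g x ≤ ∫ x in a..b, w x * c :=
      intervalIntegral.integral_mono_on hab (hg.continuousOn_mul hw)
        (hw.intervalIntegrable.mul_const c) fun x hx =>
          mul_le_mul_of_nonneg_left (hc x hx) (hw0 x hx)
    _ = c := by rw [intervalIntegral.integral_mul_const, hw1, one_mul]

end WeightedAverage

lemma integral_rescaled_reflection_eq_one {Φ : ℝ → ℝ}
    (hΦsupp : Function.support Φ ⊆ Ioo (-1 : ℝ) 0) (hΦint : ∫ x : ℝ, Φ x = 1)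
    {m₀ : ℝ} (hm₀ : 0 < m₀) :
    ∫ m in (0 : ℝ)..m₀, 1 / m₀ * Φ (-m / m₀) = 1 := by
  have hΦ : ∫ x in (-1 : ℝ)..0, Φ x = 1 := by
    rw [intervalIntegral.integral_eq_integral_of_support_subset
      (hΦsupp.trans Ioo_subset_Ioc_self), hΦint]
  simp_rw [intervalIntegral.integral_const_mul, neg_div]
  rw [intervalIntegral.integral_comp_div (fun u => Φ (-u)) hm₀.ne',
    intervalIntegral.integral_comp_neg, zero_div, div_self hm₀.ne', neg_zero, hΦ,
    smul_eq_mul, mul_one, one_div_mul_cancel hm₀.ne']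

lemma exists_lt_integral_pos {f : ℝ → ℝ} (hf : Continuous f) (hf0 : ∀ x, 0 ≤ f x)
    {a y b : ℝ} (hay : a < y) (hyb : y ≤ b) (hy : 0 < f y) :
    ∃ z, a < z ∧ z < y ∧ 0 < f z ∧ 0 < ∫ x in z..b, f x := by
  obtain ⟨l, ⟨hal, hly⟩, hpos⟩ :=
    exists_Ioc_subset_of_mem_nhds' (continuousAt_const.eventually_lt hf.continuousAt hy) hay
  obtain ⟨z, hlz, hzy⟩ := exists_between hly
  have hzy_pos : 0 < ∫ x in z..y, f x :=
    intervalIntegral.intervalIntegral_pos_of_pos_on (hf.intervalIntegrable z y)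
      (fun x hx => hpos ⟨hlz.trans hx.1, hx.2.le⟩) hzy
  refine ⟨z, hal.trans_lt hlz, hzy, hpos ⟨hlz, hzy.le⟩, hzy_pos.trans_le ?_⟩
  exact intervalIntegral.integral_mono_interval le_rfl hzy.le hyb
    (Eventually.of_forall hf0) (hf.intervalIntegrable z b)

section Markers

variable (N : ℕ) (f : ℝ → ℝ)

lemma RmN_antitone : Antitone (RmN N f) := by
  intro m m' hmm'
  refine csSup_le_csSup (bddAbove_insert_setOf_mem_Icc _ _ _ _) (insert_nonempty _ _) ?_
  exact insert_subset_insert fun x ⟨hx, hfx, hm'⟩ => ⟨hx, hfx, hmm'.trans hm'⟩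

lemma neg_le_RmN (m : ℝ) : -(N : ℝ) ≤ RmN N f m :=
  le_csSup (bddAbove_insert_setOf_mem_Icc _ _ _ _) (mem_insert _ _)

lemma le_RmN {m z : ℝ} (hz : z ∈ Icc (-(N : ℝ)) N) (hfz : 0 < f z)
    (hm : m ≤ ∫ y in z..(N : ℝ), f y) : z ≤ RmN N f m :=
  le_csSup (bddAbove_insert_setOf_mem_Icc _ _ _ _) (mem_insert_of_mem _ ⟨hz, hfz, hm⟩)

lemma RmN_le_R0N (m : ℝ) : RmN N f m ≤ R0N N f := by
  refine csSup_le_csSup (bddAbove_insert_setOf_mem_Icc _ _ _ _) (insert_nonempty _ _) ?_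
  exact insert_subset_insert fun x ⟨hx, hfx, _⟩ => ⟨hx, hfx⟩

lemma tendsto_RmN_R0N (hf : Continuous f) (hf0 : ∀ x, 0 ≤ f x) :
    Tendsto (RmN N f) (𝓝[>] 0) (𝓝 (R0N N f)) := by
  refine tendsto_order.2 ⟨fun a ha => ?_, fun a ha =>
    Eventually.of_forall fun m => (RmN_le_R0N N f m).trans_lt ha⟩
  by_cases haN : a < -(N : ℝ)
  · exact Eventually.of_forall fun m => haN.trans_le (neg_le_RmN N f m)
  obtain ⟨y, hy, hay⟩ := exists_lt_of_lt_csSup (insert_nonempty _ _) ha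
  rcases hy with rfl | ⟨hyN, hfy⟩
  · exact absurd hay haN
  obtain ⟨z, haz, hzy, hfz, hint⟩ := exists_lt_integral_pos hf hf0 hay hyN.2 hfy
  have hzN : z ∈ Icc (-(N : ℝ)) N := ⟨by linarith, hzy.le.trans hyN.2⟩
  filter_upwards [nhdsWithin_le_nhds (Iio_mem_nhds hint)] with m hm
  exact haz.trans_le (le_RmN N f hzN hfz hm.le)

variable {Φ : ℝ → ℝ} {m₀ : ℝ}

lemma RmN_le_RNmoll (hΦc : Continuous Φ) (hΦ0 : ∀ x, 0 ≤ Φ x)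
    (hΦsupp : Function.support Φ ⊆ Ioo (-1 : ℝ) 0) (hΦint : ∫ x : ℝ, Φ x = 1)
    (hm₀ : 0 < m₀) {m : ℝ} (hm : m₀ ≤ m) : RmN N f m ≤ RNmoll N Φ m₀ f :=
  le_integral_mul_of_le hm₀.le (by fun_prop) (RmN_antitone N f).intervalIntegrable
    (fun _ _ => mul_nonneg (by positivity) (hΦ0 _))
    (integral_rescaled_reflection_eq_one hΦsupp hΦint hm₀)
    fun _ hx => RmN_antitone N f (hx.2.trans hm)

lemma RNmoll_le_R0N (hΦc : Continuous Φ) (hΦ0 : ∀ x, 0 ≤ Φ x)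
    (hΦsupp : Function.support Φ ⊆ Ioo (-1 : ℝ) 0) (hΦint : ∫ x : ℝ, Φ x = 1)
    (hm₀ : 0 < m₀) : RNmoll N Φ m₀ f ≤ R0N N f :=
  integral_mul_le_of_le hm₀.le (by fun_prop) (RmN_antitone N f).intervalIntegrable
    (fun _ _ => mul_nonneg (by positivity) (hΦ0 _))
    (integral_rescaled_reflection_eq_one hΦsupp hΦint hm₀)
    fun x _ => RmN_le_R0N N f x

end Markers

/-- For continuous nonnegative `f`, a continuous mollifier `Φ ≥ 0` supported in `(-1,0)`
with `∫ Φ = 1`, and all `0 < m₀ ≤ m`, one has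
`R^{m,N}(f) ≤ R^N_{m₀}(f) ≤ R^{0,N}(f)`, and `R^N_{m₀}(f) → R^{0,N}(f)` as `m₀ ↓ 0⁺`. -/
theorem stmt_10 (f : ℝ → ℝ) (hf : Continuous f) (hf0 : ∀ x, 0 ≤ f x) (N : ℕ)
    (Φ : ℝ → ℝ) (hΦc : Continuous Φ) (hΦ0 : ∀ x, 0 ≤ Φ x)
    (hΦsupp : Function.support Φ ⊆ Set.Ioo (-1 : ℝ) 0)
    (hΦint : ∫ x : ℝ, Φ x = 1) :
    (∀ m₀ m : ℝ, 0 < m₀ → m₀ ≤ m →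
      RmN N f m ≤ RNmoll N Φ m₀ f ∧ RNmoll N Φ m₀ f ≤ R0N N f) ∧
    Filter.Tendsto (fun m₀ : ℝ => RNmoll N Φ m₀ f)
      (nhdsWithin 0 (Set.Ioi 0)) (nhds (R0N N f)) := by
  have lower := fun {m₀ m : ℝ} (hm₀ : 0 < m₀) (hm : m₀ ≤ m) =>
    RmN_le_RNmoll N f hΦc hΦ0 hΦsupp hΦint hm₀ hm
  have upper := fun {m₀ : ℝ} (hm₀ : 0 < m₀) => RNmoll_le_R0N N f hΦc hΦ0 hΦsupp hΦint hm₀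
  refine ⟨fun m₀ m hm₀ hm => ⟨lower hm₀ hm, upper hm₀⟩, ?_⟩
  refine tendsto_of_tendsto_of_tendsto_of_le_of_le' (tendsto_RmN_R0N N f hf hf0)
    tendsto_const_nhds ?_ ?_ <;>
    filter_upwards [self_mem_nhdsWithin] with m₀ hm₀
  exacts [lower hm₀ le_rfl, upper hm₀]
end
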